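/- The linear dependence on [v]_{A_1} in the inequality ‖M(f)/v‖_{L^{1,∞}(v)} ≤ c[v]_{A_1}‖f‖_{L^1} is sharp. Precisely: for every δ ∈ (0,1), the weight v(x) = |x|^{δ−1} on ℝ belongs to A_1 with c₁/δ ≤ [v]_{A_1} ≤ c₂/δ for absolute constants c₁, c₂ > 0, and the function g(x) = δ⁻¹ x^{δ−1} χ_{(0,1)}(x) satisfies ‖g‖_{L^1(ℝ)} = δ⁻², while v({x ∈ ℝ : M g(x) > v(x)}) ≥ δ⁻³. Consequently, if φ : [1,∞) → (0,∞) is increasing and v({x ∈ ℝ : M f(x) > v(x)}) ≤ φ([v]_{A_1})·‖f‖_{L^1(ℝ)} holds for all v ∈ A_1(ℝ) and all f, then there is an absolute constant c > 0 with φ(t) ≥ c·t for all large t. -/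

import Mathlib

/-!
For `v = |x| ^ (δ - 1)` and an interval `[a, b]`, the essential infimum of `v` is
`max (-a) b ^ (δ - 1)`, and concavity of `t ↦ t ^ δ` bounds the average of `v` by `2 / δ` times
that value, so `[v]_{A_1} ≤ 2 / δ`; on `[0, 1]` the average is `1 / δ` while `v ≤ 2` on
`[1/2, 1]`, so `[v]_{A_1} ≥ 1 / (2δ)`.

The average of `g = δ⁻¹ x^{δ-1} χ_{(0,1)}` over `[0, x]` is `δ⁻² min(x, 1)^δ / x`, which exceeds
`v x` on `(0, X)` with `X^δ = δ⁻²`, an interval of `v`-measure `δ⁻³`. Against `‖g‖₁ = δ⁻²`, a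
weak-type bound with constant `φ([v]_{A_1})` forces `φ([v]_{A_1}) ≥ 1 / δ`; taking `δ = 2 / t`
and using `[v]_{A_1} ≤ t` and monotonicity gives `φ t ≥ t / 2`.
-/

open MeasureTheory ENNReal Set Filter

noncomputable section

/-- Nondegenerate (closed) intervals of `ℝ`. -/
def IsIntv (Q : Set ℝ) : Prop := ∃ a b : ℝ, a < b ∧ Q = Set.Icc a b

/-- A weight: a nonnegative locally integrable (measurable) function on `ℝ`. -/
def IsWeight (w : ℝ → ℝ) : Prop :=
  Measurable w ∧ (∀ x, 0 ≤ w x) ∧ LocallyIntegrable w volume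

/-- `w(E) = ∫_E w dx`. -/
def wMeas (w : ℝ → ℝ) (E : Set ℝ) : ℝ≥0∞ :=
  ∫⁻ x in E, ENNReal.ofReal (w x)

/-- The average `|Q|⁻¹ ∫_Q w`. -/
def avgE (w : ℝ → ℝ) (Q : Set ℝ) : ℝ≥0∞ :=
  (volume Q)⁻¹ * ∫⁻ x in Q, ENNReal.ofReal (w x)

/-- The `A_1` quantity of `w` over an interval `Q`. -/
def A1Q (w : ℝ → ℝ) (Q : Set ℝ) : ℝ≥0∞ :=
  avgE w Q * (essInf (fun x => ENNReal.ofReal (w x)) (volume.restrict Q))⁻¹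

/-- The `A_1` constant `[w]_{A_1}` (supremum over all intervals). -/
def A1Const (w : ℝ → ℝ) : ℝ≥0∞ :=
  ⨆ (Q : Set ℝ) (_ : IsIntv Q), A1Q w Q

/-- The Hardy–Littlewood maximal operator over intervals containing `x`. -/
def maxOp (f : ℝ → ℝ) (x : ℝ) : ℝ≥0∞ :=
  ⨆ (Q : Set ℝ) (_ : IsIntv Q) (_ : x ∈ Q), avgE (fun y => |f y|) Q

def powerWeight (δ : ℝ) (x : ℝ) : ℝ := |x| ^ (δ - 1)

def powerSpike (δ : ℝ) : ℝ → ℝ := indicator (Ioo 0 1) fun y => δ⁻¹ * y ^ (δ - 1)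

lemma setLIntegral_Ioo_rpow_sub_one {δ a b : ℝ} (hδ : 0 < δ) (ha : 0 ≤ a) (hab : a ≤ b) :
    ∫⁻ y in Ioo a b, ENNReal.ofReal (y ^ (δ - 1)) = ENNReal.ofReal ((b ^ δ - a ^ δ) / δ) := by
  have hr : (-1 : ℝ) < δ - 1 := by linarith
  have hint : IntegrableOn (fun y : ℝ => y ^ (δ - 1)) (Ioc a b) :=
    (intervalIntegrable_iff_integrableOn_Ioc_of_le hab).mp
      (intervalIntegral.intervalIntegrable_rpow' hr)
  rw [setLIntegral_congr Ioo_ae_eq_Ioc, ← ofReal_integral_eq_lintegral_ofReal hint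
    ((ae_restrict_mem measurableSet_Ioc).mono fun y hy => Real.rpow_nonneg (ha.trans hy.1.le) _),
    ← intervalIntegral.integral_of_le hab, integral_rpow (Or.inl hr)]
  ring_nf

lemma setLIntegral_Ioo_comp_neg (f : ℝ → ℝ≥0∞) (a b : ℝ) :
    ∫⁻ x in Ioo a b, f (-x) = ∫⁻ x in Ioo (-b) (-a), f x := by
  have h := (Measure.measurePreserving_neg volume).setLIntegral_comp_preimage_emb
    measurableEmbedding_neg f (Ioo (-b) (-a))
  rwa [Set.neg_preimage, neg_Ioo, neg_neg, neg_neg] at h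

lemma powerWeight_neg (δ x : ℝ) : powerWeight δ (-x) = powerWeight δ x := by
  simp only [powerWeight, abs_neg]

lemma setLIntegral_Ioo_neg_powerWeight (δ a b : ℝ) :
    ∫⁻ x in Ioo (-b) (-a), ENNReal.ofReal (powerWeight δ x)
      = ∫⁻ x in Ioo a b, ENNReal.ofReal (powerWeight δ x) := by
  simp_rw [← setLIntegral_Ioo_comp_neg, powerWeight_neg]

lemma setLIntegral_Ioo_powerWeight_of_nonneg {δ a b : ℝ} (hδ : 0 < δ) (ha : 0 ≤ a)
    (hab : a ≤ b) :
    ∫⁻ x in Ioo a b, ENNReal.ofReal (powerWeight δ x) = ENNReal.ofReal ((b ^ δ - a ^ δ) / δ) := by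
  rw [← setLIntegral_Ioo_rpow_sub_one hδ ha hab]
  refine setLIntegral_congr_fun measurableSet_Ioo fun x hx => ?_
  rw [powerWeight, abs_of_pos (ha.trans_lt hx.1)]

/-- Concavity of `t ↦ t ^ δ`, compared with the slope at the right endpoint. -/
lemma rpow_sub_rpow_le_rpow_sub_one_mul {δ a b : ℝ} (hδ0 : 0 < δ) (hδ1 : δ ≤ 1) (ha : 0 ≤ a)
    (hab : a ≤ b) : b ^ δ - a ^ δ ≤ b ^ (δ - 1) * (b - a) := by
  have hpow : ∀ t : ℝ, 0 ≤ t → t ^ δ = t ^ (δ - 1) * t := fun t ht => by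
    simpa using Real.rpow_add' ht (by simpa using hδ0.ne' : δ - 1 + 1 ≠ 0)
  have hslope : b ^ (δ - 1) * a ≤ a ^ (δ - 1) * a := by
    rcases ha.eq_or_lt with rfl | ha
    · simp
    · exact mul_le_mul_of_nonneg_right (Real.rpow_le_rpow_of_nonpos ha hab (by linarith)) ha.le
  rw [hpow a ha, hpow b (ha.trans hab)]
  linarith

lemma setLIntegral_Ioo_powerWeight_le_of_neg_le {δ a b : ℝ} (hδ0 : 0 < δ) (hδ1 : δ ≤ 1)
    (hab : a < b) (hba : -a ≤ b) :
    ∫⁻ x in Ioo a b, ENNReal.ofReal (powerWeight δ x)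
      ≤ ENNReal.ofReal (2 / δ * b ^ (δ - 1) * (b - a)) := by
  have hb : 0 < b := by linarith
  rcases le_or_gt 0 a with ha | ha
  · rw [setLIntegral_Ioo_powerWeight_of_nonneg hδ0 ha hab.le]
    refine ENNReal.ofReal_le_ofReal ?_
    have hconc := rpow_sub_rpow_le_rpow_sub_one_mul hδ0 hδ1 ha hab.le
    have hslope : 0 ≤ b ^ (δ - 1) * (b - a) :=
      mul_nonneg (Real.rpow_nonneg hb.le _) (by linarith)
    calc (b ^ δ - a ^ δ) / δ ≤ 2 * (b ^ (δ - 1) * (b - a)) / δ := by gcongr; linarith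
      _ = 2 / δ * b ^ (δ - 1) * (b - a) := by ring
  · have hsplit : ∫⁻ x in Ioo a b, ENNReal.ofReal (powerWeight δ x)
        ≤ (∫⁻ x in Ioo a 0, ENNReal.ofReal (powerWeight δ x))
          + ∫⁻ x in Ioo 0 b, ENNReal.ofReal (powerWeight δ x) := by
      rw [setLIntegral_congr Ioo_ae_eq_Ioc, ← Ioc_union_Ioc_eq_Ioc ha.le hb.le,
        lintegral_union measurableSet_Ioc (Ioc_disjoint_Ioc_of_le le_rfl),
        setLIntegral_congr Ioo_ae_eq_Ioc, setLIntegral_congr (Ioo_ae_eq_Ioc (a := 0))]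
    have hleft : ∫⁻ x in Ioo a 0, ENNReal.ofReal (powerWeight δ x)
        = ENNReal.ofReal ((-a) ^ δ / δ) := by
      rw [← setLIntegral_Ioo_neg_powerWeight, neg_zero,
        setLIntegral_Ioo_powerWeight_of_nonneg hδ0 le_rfl (by linarith),
        Real.zero_rpow hδ0.ne', sub_zero]
    have hright : ∫⁻ x in Ioo 0 b, ENNReal.ofReal (powerWeight δ x)
        = ENNReal.ofReal (b ^ δ / δ) := by
      rw [setLIntegral_Ioo_powerWeight_of_nonneg hδ0 le_rfl hb.le, Real.zero_rpow hδ0.ne',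
        sub_zero]
    rw [hleft, hright, ← ENNReal.ofReal_add
      (div_nonneg (Real.rpow_nonneg (by linarith) _) hδ0.le) (by positivity)] at hsplit
    refine hsplit.trans (ENNReal.ofReal_le_ofReal ?_)
    have hpow : b ^ δ = b ^ (δ - 1) * b := by
      rw [Real.rpow_sub_one hb.ne', div_mul_cancel₀ _ hb.ne']
    have hab' : (-a) ^ δ ≤ b ^ δ := Real.rpow_le_rpow (by linarith) hba hδ0.le
    have hb' : b ^ (δ - 1) * b ≤ b ^ (δ - 1) * (b - a) :=
      mul_le_mul_of_nonneg_left (by linarith) (Real.rpow_nonneg hb.le _)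
    calc (-a) ^ δ / δ + b ^ δ / δ ≤ 2 * (b ^ (δ - 1) * (b - a)) / δ := by
          rw [← add_div]; gcongr; linarith
      _ = 2 / δ * b ^ (δ - 1) * (b - a) := by ring

/-- Since the weight is even, reflecting `[a, b]` reduces to the case `-a ≤ b`. -/
lemma setLIntegral_Ioo_powerWeight_le {δ a b : ℝ} (hδ0 : 0 < δ) (hδ1 : δ ≤ 1) (hab : a < b) :
    ∫⁻ x in Ioo a b, ENNReal.ofReal (powerWeight δ x)
      ≤ ENNReal.ofReal (2 / δ * max (-a) b ^ (δ - 1) * (b - a)) := by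
  rcases le_total (-a) b with hba | hba
  · rw [max_eq_right hba]
    exact setLIntegral_Ioo_powerWeight_le_of_neg_le hδ0 hδ1 hab hba
  · rw [max_eq_left hba, ← setLIntegral_Ioo_neg_powerWeight]
    convert setLIntegral_Ioo_powerWeight_le_of_neg_le hδ0 hδ1 (neg_lt_neg hab)
      (by rwa [neg_neg]) using 3
    ring

lemma avgE_Icc_powerWeight_le {δ a b : ℝ} (hδ0 : 0 < δ) (hδ1 : δ ≤ 1) (hab : a < b) :
    avgE (powerWeight δ) (Icc a b) ≤ ENNReal.ofReal (2 / δ * max (-a) b ^ (δ - 1)) := by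
  have hlen : 0 < b - a := by linarith
  rw [avgE, Real.volume_Icc, setLIntegral_congr Ioo_ae_eq_Icc.symm,
    ← ENNReal.ofReal_inv_of_pos hlen]
  calc ENNReal.ofReal (b - a)⁻¹ * ∫⁻ x in Ioo a b, ENNReal.ofReal (powerWeight δ x)
      ≤ ENNReal.ofReal (b - a)⁻¹ * ENNReal.ofReal (2 / δ * max (-a) b ^ (δ - 1) * (b - a)) :=
        mul_le_mul_right (setLIntegral_Ioo_powerWeight_le hδ0 hδ1 hab) _
    _ = ENNReal.ofReal (2 / δ * max (-a) b ^ (δ - 1)) := by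
        rw [← ENNReal.ofReal_mul (by positivity)]
        congr 1
        field_simp

lemma ofReal_rpow_le_essInf_powerWeight {δ a b : ℝ} (hδ1 : δ ≤ 1) :
    ENNReal.ofReal (max (-a) b ^ (δ - 1))
      ≤ essInf (fun x => ENNReal.ofReal (powerWeight δ x)) (volume.restrict (Icc a b)) := by
  refine le_essInf_of_ae_le _ ?_
  filter_upwards [ae_restrict_of_ae (volume.ae_ne 0), ae_restrict_mem measurableSet_Icc]
    with x hx0 hx
  refine ENNReal.ofReal_le_ofReal (Real.rpow_le_rpow_of_nonpos (abs_pos.mpr hx0) ?_ (by linarith))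
  exact abs_le.mpr ⟨by linarith [hx.1, le_max_left (-a) b], hx.2.trans (le_max_right _ _)⟩

lemma A1Q_Icc_powerWeight_le {δ a b : ℝ} (hδ0 : 0 < δ) (hδ1 : δ ≤ 1) (hab : a < b) :
    A1Q (powerWeight δ) (Icc a b) ≤ ENNReal.ofReal (2 / δ) := by
  have hm : 0 < max (-a) b ^ (δ - 1) :=
    Real.rpow_pos_of_pos (lt_max_iff.mpr (by by_contra! h; linarith)) _
  calc A1Q (powerWeight δ) (Icc a b)
      ≤ ENNReal.ofReal (2 / δ * max (-a) b ^ (δ - 1)) * (ENNReal.ofReal (max (-a) b ^ (δ - 1)))⁻¹ :=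
        mul_le_mul' (avgE_Icc_powerWeight_le hδ0 hδ1 hab)
          (ENNReal.inv_le_inv' (ofReal_rpow_le_essInf_powerWeight hδ1))
    _ = ENNReal.ofReal (2 / δ) := by
        rw [← ENNReal.ofReal_inv_of_pos hm, ← ENNReal.ofReal_mul (by positivity)]
        congr 1
        field_simp

lemma A1Const_powerWeight_le {δ : ℝ} (hδ0 : 0 < δ) (hδ1 : δ ≤ 1) :
    A1Const (powerWeight δ) ≤ ENNReal.ofReal (2 / δ) := by
  refine iSup₂_le ?_
  rintro Q ⟨a, b, hab, rfl⟩
  exact A1Q_Icc_powerWeight_le hδ0 hδ1 hab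

lemma A1Const_powerWeight_ne_top {δ : ℝ} (hδ0 : 0 < δ) (hδ1 : δ ≤ 1) :
    A1Const (powerWeight δ) ≠ ∞ :=
  ne_top_of_le_ne_top ENNReal.ofReal_ne_top (A1Const_powerWeight_le hδ0 hδ1)

lemma avgE_Icc_zero_one_powerWeight {δ : ℝ} (hδ : 0 < δ) :
    avgE (powerWeight δ) (Icc 0 1) = ENNReal.ofReal (1 / δ) := by
  rw [avgE, Real.volume_Icc, setLIntegral_congr Ioo_ae_eq_Icc.symm,
    setLIntegral_Ioo_powerWeight_of_nonneg hδ le_rfl zero_le_one]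
  simp [Real.zero_rpow hδ.ne']

/-- On `[1/2, 1] ⊆ [0, 1]` the weight is at most `2`. -/
lemma essInf_powerWeight_Icc_zero_one_le {δ : ℝ} (hδ : 0 ≤ δ) :
    essInf (fun x => ENNReal.ofReal (powerWeight δ x)) (volume.restrict (Icc 0 1))
      ≤ ENNReal.ofReal 2 := by
  have hhalf : volume.restrict (Icc (1 / 2 : ℝ) 1) ≪ volume.restrict (Icc 0 1) :=
    Measure.absolutelyContinuous_of_le
      (Measure.restrict_mono (Icc_subset_Icc (by norm_num) le_rfl) le_rfl)
  have hne : volume.restrict (Icc (1 / 2 : ℝ) 1) ≠ 0 := by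
    norm_num [Measure.restrict_eq_zero, Real.volume_Icc]
  have hle : (fun x => ENNReal.ofReal (powerWeight δ x))
      ≤ᵐ[volume.restrict (Icc (1 / 2 : ℝ) 1)] fun _ => ENNReal.ofReal 2 := by
    filter_upwards [ae_restrict_mem measurableSet_Icc] with x hx
    have hx0 : 0 < x := by linarith [hx.1]
    refine ENNReal.ofReal_le_ofReal ?_
    calc powerWeight δ x = x ^ (δ - 1) := by rw [powerWeight, abs_of_pos hx0]
      _ ≤ x ^ (-1 : ℝ) := Real.rpow_le_rpow_of_exponent_ge hx0 hx.2 (by linarith)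
      _ ≤ 2 := by
        rw [Real.rpow_neg_one, inv_le_comm₀ hx0 two_pos]
        linarith [hx.1]
  exact (essInf_antitone_measure hhalf).trans
    ((essInf_mono_ae hle).trans (essInf_const _ hne).le)

lemma A1Const_powerWeight_ge {δ : ℝ} (hδ : 0 < δ) :
    ENNReal.ofReal (1 / 2 / δ) ≤ A1Const (powerWeight δ) := by
  have hQ : ENNReal.ofReal (1 / 2 / δ) ≤ A1Q (powerWeight δ) (Icc 0 1) := by
    calc ENNReal.ofReal (1 / 2 / δ) = ENNReal.ofReal (1 / δ) * (ENNReal.ofReal 2)⁻¹ := by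
          rw [← ENNReal.ofReal_inv_of_pos two_pos, ← ENNReal.ofReal_mul (by positivity)]
          ring_nf
      _ ≤ A1Q (powerWeight δ) (Icc 0 1) := by
          rw [A1Q, avgE_Icc_zero_one_powerWeight hδ]
          gcongr
          exact essInf_powerWeight_Icc_zero_one_le hδ.le
  exact hQ.trans (le_iSup₂_of_le (Icc 0 1) ⟨0, 1, one_pos, rfl⟩ le_rfl)

lemma powerWeight_isWeight {δ : ℝ} (hδ : 0 < δ) : IsWeight (powerWeight δ) := by
  have hmeas : Measurable (powerWeight δ) := by unfold powerWeight; fun_prop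
  refine ⟨hmeas, fun x => Real.rpow_nonneg (abs_nonneg x) _, ?_⟩
  refine locallyIntegrable_of_norm_le_rpow (C := 1) (α := 1 - δ) (by simp) (by simp [hδ])
    (Eventually.of_forall fun x => ?_) hmeas.aestronglyMeasurable
  simp [powerWeight, abs_of_nonneg (Real.rpow_nonneg (abs_nonneg x) _)]

lemma ofReal_abs_powerSpike {δ : ℝ} (hδ : 0 ≤ δ) (x : ℝ) :
    ENNReal.ofReal |powerSpike δ x|
      = (Ioo 0 1).indicator (fun y => ENNReal.ofReal (δ⁻¹ * y ^ (δ - 1))) x := by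
  by_cases hx : x ∈ Ioo (0 : ℝ) 1
  · rw [powerSpike, indicator_of_mem hx, indicator_of_mem hx,
      abs_of_nonneg (mul_nonneg (inv_nonneg.mpr hδ) (Real.rpow_nonneg hx.1.le _))]
  · rw [powerSpike, indicator_of_notMem hx, indicator_of_notMem hx, abs_zero, ENNReal.ofReal_zero]

lemma setLIntegral_Ioo_powerSpike {δ s : ℝ} (hδ : 0 < δ) (hs0 : 0 ≤ s) (hs1 : s ≤ 1) :
    ∫⁻ y in Ioo 0 s, ENNReal.ofReal |powerSpike δ y| = ENNReal.ofReal (s ^ δ / δ ^ 2) := by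
  have hspike : ∀ y ∈ Ioo 0 s, ENNReal.ofReal |powerSpike δ y|
      = ENNReal.ofReal δ⁻¹ * ENNReal.ofReal (y ^ (δ - 1)) := fun y hy => by
    have hy1 : y ∈ Ioo (0 : ℝ) 1 := ⟨hy.1, hy.2.trans_le hs1⟩
    rw [ofReal_abs_powerSpike hδ.le, indicator_of_mem hy1,
      ENNReal.ofReal_mul (inv_nonneg.mpr hδ.le)]
  rw [setLIntegral_congr_fun measurableSet_Ioo hspike, lintegral_const_mul _ (by fun_prop),
    setLIntegral_Ioo_rpow_sub_one hδ le_rfl hs0, ← ENNReal.ofReal_mul (by positivity),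
    Real.zero_rpow hδ.ne', sub_zero]
  congr 1
  field_simp

lemma lintegral_powerSpike {δ : ℝ} (hδ : 0 < δ) :
    ∫⁻ x, ENNReal.ofReal |powerSpike δ x| = ENNReal.ofReal (1 / δ ^ 2) := by
  rw [← setLIntegral_eq_of_support_subset (s := Ioo 0 1),
    setLIntegral_Ioo_powerSpike hδ zero_le_one le_rfl, Real.one_rpow]
  simp_rw [ofReal_abs_powerSpike hδ.le]
  exact support_indicator_subset

lemma avgE_le_maxOp (f : ℝ → ℝ) {a b x : ℝ} (hab : a < b) (hx : x ∈ Icc a b) :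
    avgE (fun y => |f y|) (Icc a b) ≤ maxOp f x :=
  le_iSup₂_of_le (Icc a b) ⟨a, b, hab, rfl⟩ (le_iSup_of_le hx le_rfl)

/-- Witnessed by the interval `[0, x]`. -/
lemma powerWeight_lt_maxOp_powerSpike {δ x : ℝ} (hδ0 : 0 < δ) (hδ1 : δ < 1) (hx : 0 < x)
    (hxδ : δ ^ 2 * x ^ δ < 1) :
    ENNReal.ofReal (powerWeight δ x) < maxOp (powerSpike δ) x := by
  set s := min x 1
  have hs : 0 < s := lt_min hx one_pos
  have hkey : δ ^ 2 * x ^ δ < s ^ δ := by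
    rcases le_total x 1 with hx1 | hx1
    · rw [show s = x from min_eq_left hx1]
      nlinarith [mul_lt_mul_of_pos_right (show δ ^ 2 < 1 by nlinarith) (Real.rpow_pos_of_pos hx δ)]
    · rwa [show s = 1 from min_eq_right hx1, Real.one_rpow]
  have hreal : powerWeight δ x < x⁻¹ * (s ^ δ / δ ^ 2) := by
    rw [powerWeight, abs_of_pos hx, Real.rpow_sub_one hx.ne', div_eq_inv_mul]
    refine mul_lt_mul_of_pos_left ?_ (inv_pos.mpr hx)
    rw [lt_div_iff₀ (by positivity)]
    linarith
  calc ENNReal.ofReal (powerWeight δ x)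
      < ENNReal.ofReal x⁻¹ * ENNReal.ofReal (s ^ δ / δ ^ 2) := by
        rw [← ENNReal.ofReal_mul (inv_nonneg.mpr hx.le)]
        exact (ENNReal.ofReal_lt_ofReal_iff (by positivity)).mpr hreal
    _ ≤ avgE (fun y => |powerSpike δ y|) (Icc 0 x) := by
        rw [avgE, Real.volume_Icc, sub_zero, ← ENNReal.ofReal_inv_of_pos hx,
          ← setLIntegral_Ioo_powerSpike hδ0 hs.le (min_le_right _ _)]
        gcongr
        exact Ioo_subset_Icc_self.trans (Icc_subset_Icc le_rfl (min_le_left _ _))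
    _ ≤ maxOp (powerSpike δ) x := avgE_le_maxOp _ hx ⟨hx.le, le_rfl⟩

lemma ofReal_inv_pow_three_le_wMeas {δ : ℝ} (hδ0 : 0 < δ) (hδ1 : δ < 1) :
    ENNReal.ofReal (1 / δ ^ 3) ≤
      wMeas (powerWeight δ) {x | ENNReal.ofReal (powerWeight δ x) < maxOp (powerSpike δ) x} := by
  set X := (1 / δ ^ 2) ^ δ⁻¹
  have hX : 0 < X := by positivity
  have hXδ : X ^ δ = 1 / δ ^ 2 := by
    rw [← Real.rpow_mul (by positivity), inv_mul_cancel₀ hδ0.ne', Real.rpow_one]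
  have hsub : Ioo 0 X ⊆ {x | ENNReal.ofReal (powerWeight δ x) < maxOp (powerSpike δ) x} := by
    refine fun x hx => powerWeight_lt_maxOp_powerSpike hδ0 hδ1 hx.1 ?_
    have := Real.rpow_lt_rpow hx.1.le hx.2 hδ0
    rw [hXδ, lt_div_iff₀ (by positivity)] at this
    linarith
  calc ENNReal.ofReal (1 / δ ^ 3)
      = ∫⁻ x in Ioo 0 X, ENNReal.ofReal (powerWeight δ x) := by
        rw [setLIntegral_Ioo_powerWeight_of_nonneg hδ0 le_rfl hX.le, hXδ, Real.zero_rpow hδ0.ne',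
          sub_zero]
        congr 1
        field_simp
    _ ≤ _ := lintegral_mono_set hsub

lemma one_div_le_of_weak_type_bound {φ : ℝ → ℝ}
    (H : ∀ v : ℝ → ℝ, IsWeight v → A1Const v ≠ ∞ → ∀ f : ℝ → ℝ,
      wMeas v {x : ℝ | ENNReal.ofReal (v x) < maxOp f x} ≤
        ENNReal.ofReal (φ (A1Const v).toReal) * ∫⁻ x, ENNReal.ofReal |f x|)
    {δ : ℝ} (hδ0 : 0 < δ) (hδ1 : δ < 1) :
    1 / δ ≤ φ (A1Const (powerWeight δ)).toReal := by
  have h := (ofReal_inv_pow_three_le_wMeas hδ0 hδ1).trans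
    (H _ (powerWeight_isWeight hδ0) (A1Const_powerWeight_ne_top hδ0 hδ1.le) (powerSpike δ))
  rw [lintegral_powerSpike hδ0, ← ENNReal.ofReal_mul' (by positivity),
    ENNReal.ofReal_le_ofReal_iff', or_iff_left (by simp [hδ0])] at h
  calc 1 / δ = 1 / δ ^ 3 * δ ^ 2 := by field_simp
    _ ≤ φ (A1Const (powerWeight δ)).toReal * (1 / δ ^ 2) * δ ^ 2 := by gcongr
    _ = φ (A1Const (powerWeight δ)).toReal := by field_simp

/-- Sharpness of the linear dependence on `[v]_{A_1}`: for `δ ∈ (0,1)` the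
weight `v(x) = |x|^{δ-1}` has `[v]_{A_1} ≍ 1/δ`, the function `g = δ⁻¹ x^{δ-1} χ_{(0,1)}` has
`‖g‖_{L¹} = δ⁻²` while `v({Mg > v}) ≥ δ⁻³`; consequently any increasing
`φ : [1,∞) → (0,∞)` with `v({Mf > v}) ≤ φ([v]_{A_1}) ‖f‖_{L¹}` for all `v ∈ A_1`, `f`
satisfies `φ(t) ≥ c t` for all large `t`. -/
theorem stmt2 :
    (∃ c₁ c₂ : ℝ, 0 < c₁ ∧ 0 < c₂ ∧
      ∀ δ : ℝ, 0 < δ → δ < 1 →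
        ENNReal.ofReal (c₁ / δ) ≤ A1Const (fun x : ℝ => |x| ^ (δ - 1)) ∧
        A1Const (fun x : ℝ => |x| ^ (δ - 1)) ≤ ENNReal.ofReal (c₂ / δ) ∧
        (∫⁻ x : ℝ,
            ENNReal.ofReal |Set.indicator (Set.Ioo (0 : ℝ) 1) (fun y => δ⁻¹ * y ^ (δ - 1)) x|)
          = ENNReal.ofReal (1 / δ ^ 2) ∧
        ENNReal.ofReal (1 / δ ^ 3) ≤
          wMeas (fun x : ℝ => |x| ^ (δ - 1))
            {x : ℝ | ENNReal.ofReal (|x| ^ (δ - 1)) <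
              maxOp (Set.indicator (Set.Ioo (0 : ℝ) 1) (fun y => δ⁻¹ * y ^ (δ - 1))) x}) ∧
    ∀ φ : ℝ → ℝ, MonotoneOn φ (Set.Ici 1) → (∀ s, 1 ≤ s → 0 < φ s) →
      (∀ v : ℝ → ℝ, IsWeight v → A1Const v ≠ ∞ →
        ∀ f : ℝ → ℝ,
          wMeas v {x : ℝ | ENNReal.ofReal (v x) < maxOp f x} ≤
            ENNReal.ofReal (φ (A1Const v).toReal) * ∫⁻ x, ENNReal.ofReal |f x|) →
      ∃ c : ℝ, 0 < c ∧ ∃ t₀ : ℝ, ∀ t, t₀ ≤ t → c * t ≤ φ t := by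
  refine ⟨⟨1 / 2, 2, by norm_num, two_pos, fun δ hδ0 hδ1 =>
    ⟨A1Const_powerWeight_ge hδ0, A1Const_powerWeight_le hδ0 hδ1.le, lintegral_powerSpike hδ0,
      ofReal_inv_pow_three_le_wMeas hδ0 hδ1⟩⟩,
    fun φ hφ _ H => ⟨1 / 2, by norm_num, 4, fun t ht => ?_⟩⟩
  set δ := 2 / t
  have hδ0 : 0 < δ := by positivity
  have hδ1 : δ < 1 := by rw [div_lt_one (by linarith)]; linarith
  have htδ : 2 / δ = t := div_div_cancel₀ two_ne_zero
  have hT_le : (A1Const (powerWeight δ)).toReal ≤ t :=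
    htδ ▸ ENNReal.toReal_le_of_le_ofReal (by positivity) (A1Const_powerWeight_le hδ0 hδ1.le)
  have hT_ge : 1 ≤ (A1Const (powerWeight δ)).toReal := by
    have := (ENNReal.ofReal_le_iff_le_toReal (A1Const_powerWeight_ne_top hδ0 hδ1.le)).mp
      (A1Const_powerWeight_ge hδ0)
    have h4 : 1 / 2 / δ = t / 4 := by rw [← htδ]; ring
    linarith
  calc 1 / 2 * t = 1 / δ := by rw [← htδ]; ring
    _ ≤ φ (A1Const (powerWeight δ)).toReal := one_div_le_of_weak_type_bound H hδ0 hδ1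
    _ ≤ φ t := hφ hT_ge (hT_ge.trans hT_le) hT_le
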